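/- (Left-handed Ackermann lemma.) Let p be a propositional variable, let θ₁,…,θ_n be L(@)^+-formulas not containing p, and let η₁ ≤ ι₁, …, η_m ≤ ι_m be inequalities of L(@)^+-formulas such that every occurrence of p in each η_j is negative and every occurrence of p in each ι_j is positive. Set θ := θ₁ ∧ … ∧ θ_n (with θ := ⊤ when n = 0). Then for every frame F = (W,R) and every valuation V: there exists a valuation V′ that agrees with V on all propositional variables other than p and on all nominals, such that (F,V′) ⊨ p ≤ θ_i for all 1 ≤ i ≤ n and (F,V′) ⊨ η_j ≤ ι_j for all 1 ≤ j ≤ m, if and only if (F,V) ⊨ η_j[θ/p] ≤ ι_j[θ/p] for all 1 ≤ j ≤ m, where [θ/p] denotes uniform substitution of θ for p. -/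
import Mathlib


/-- Formulas of the expanded hybrid language L(@)⁺: L(@) together with the
converse modalities ◆ (`bdia`) and ■ (`bbox`).  Propositional variables and
nominals are indexed by natural numbers. -/
inductive HFormP : Type
  | prop : ℕ → HFormP
  | nom : ℕ → HFormP
  | bot : HFormP
  | top : HFormP
  | neg : HFormP → HFormP
  | or : HFormP → HFormP → HFormP
  | and : HFormP → HFormP → HFormP
  | imp : HFormP → HFormP → HFormP
  | dia : HFormP → HFormP
  | box : HFormP → HFormP
  | at' : ℕ → HFormP → HFormP
  | bdia : HFormP → HFormP
  | bbox : HFormP → HFormP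

/-- Satisfaction in a model `(W, R, V)`, where the valuation is split into `Vp`
(for propositional variables) and `Vn` (assigning to each nominal the unique
world in its singleton truth set). -/
def sat {W : Type} (R : W → W → Prop) (Vp : ℕ → Set W) (Vn : ℕ → W) : W → HFormP → Prop
  | w, .prop p => w ∈ Vp p
  | w, .nom i => w = Vn i
  | _, .bot => False
  | _, .top => True
  | w, .neg φ => ¬ sat R Vp Vn w φ
  | w, .or φ ψ => sat R Vp Vn w φ ∨ sat R Vp Vn w ψ
  | w, .and φ ψ => sat R Vp Vn w φ ∧ sat R Vp Vn w ψ
  | w, .imp φ ψ => sat R Vp Vn w φ → sat R Vp Vn w ψ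
  | w, .dia φ => ∃ v, R w v ∧ sat R Vp Vn v φ
  | w, .box φ => ∀ v, R w v → sat R Vp Vn v φ
  | _, .at' i φ => sat R Vp Vn (Vn i) φ
  | w, .bdia φ => ∃ v, R v w ∧ sat R Vp Vn v φ
  | w, .bbox φ => ∀ v, R v w → sat R Vp Vn v φ

/-- The inequality `φ ≤ ψ` holds in a model iff the truth set of `φ` is
included in the truth set of `ψ`. -/
def leq {W : Type} (R : W → W → Prop) (Vp : ℕ → Set W) (Vn : ℕ → W) (φ ψ : HFormP) : Prop :=
  ∀ w : W, sat R Vp Vn w φ → sat R Vp Vn w ψ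

mutual
  /-- Every occurrence of the propositional variable p in the formula is
  positive (lies under an even number of polarity reversals: ¬ and the
  antecedent of → reverse polarity, all other connectives preserve it). -/
  def allPos (p : ℕ) : HFormP → Prop
    | .prop _ => True
    | .nom _ => True
    | .bot => True
    | .top => True
    | .neg φ => allNeg p φ
    | .or φ ψ => allPos p φ ∧ allPos p ψ
    | .and φ ψ => allPos p φ ∧ allPos p ψ
    | .imp φ ψ => allNeg p φ ∧ allPos p ψ
    | .dia φ => allPos p φ
    | .box φ => allPos p φ
    | .at' _ φ => allPos p φ
    | .bdia φ => allPos p φ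
    | .bbox φ => allPos p φ

  /-- Every occurrence of the propositional variable p in the formula is
  negative (lies under an odd number of polarity reversals). -/
  def allNeg (p : ℕ) : HFormP → Prop
    | .prop q => q ≠ p
    | .nom _ => True
    | .bot => True
    | .top => True
    | .neg φ => allPos p φ
    | .or φ ψ => allNeg p φ ∧ allNeg p ψ
    | .and φ ψ => allNeg p φ ∧ allNeg p ψ
    | .imp φ ψ => allPos p φ ∧ allNeg p ψ
    | .dia φ => allNeg p φ
    | .box φ => allNeg p φ
    | .at' _ φ => allNeg p φ
    | .bdia φ => allNeg p φ
    | .bbox φ => allNeg p φ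
end

/-- The propositional variable p occurs in the formula. -/
def propOccurs (p : ℕ) : HFormP → Prop
  | .prop q => q = p
  | .nom _ => False
  | .bot => False
  | .top => False
  | .neg φ => propOccurs p φ
  | .or φ ψ => propOccurs p φ ∨ propOccurs p ψ
  | .and φ ψ => propOccurs p φ ∨ propOccurs p ψ
  | .imp φ ψ => propOccurs p φ ∨ propOccurs p ψ
  | .dia φ => propOccurs p φ
  | .box φ => propOccurs p φ
  | .at' _ φ => propOccurs p φ
  | .bdia φ => propOccurs p φ
  | .bbox φ => propOccurs p φ

/-- Uniform substitution of the formula θ for the propositional variable p. -/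
def substProp (p : ℕ) (θ : HFormP) : HFormP → HFormP
  | .prop q => if q = p then θ else .prop q
  | .nom i => .nom i
  | .bot => .bot
  | .top => .top
  | .neg φ => .neg (substProp p θ φ)
  | .or φ ψ => .or (substProp p θ φ) (substProp p θ ψ)
  | .and φ ψ => .and (substProp p θ φ) (substProp p θ ψ)
  | .imp φ ψ => .imp (substProp p θ φ) (substProp p θ ψ)
  | .dia φ => .dia (substProp p θ φ)
  | .box φ => .box (substProp p θ φ)
  | .at' i φ => .at' i (substProp p θ φ)
  | .bdia φ => .bdia (substProp p θ φ)
  | .bbox φ => .bbox (substProp p θ φ)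

/-- Disjunction of a list of formulas; the empty disjunction is ⊥. -/
def bigOr : List HFormP → HFormP
  | [] => .bot
  | [φ] => φ
  | φ :: rest => .or φ (bigOr rest)

/-- Conjunction of a list of formulas; the empty conjunction is ⊤. -/
def bigAnd : List HFormP → HFormP
  | [] => .top
  | [φ] => φ
  | φ :: rest => .and φ (bigAnd rest)

lemma sat_agree {W : Type} (R : W → W → Prop) (Vn : ℕ → W) (p : ℕ)
    (Vp1 Vp2 : ℕ → Set W) (h : ∀ q, q ≠ p → Vp1 q = Vp2 q) :
    ∀ φ, ¬ propOccurs p φ → ∀ w, (sat R Vp1 Vn w φ ↔ sat R Vp2 Vn w φ) := by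
  intro φ
  induction φ with
  | prop q => intro hocc w; simp only [sat]; rw [h q (by simpa [propOccurs] using hocc)]
  | nom i => intro _ w; simp [sat]
  | bot => intro _ w; simp [sat]
  | top => intro _ w; simp [sat]
  | neg φ ih => intro hocc w; simp only [sat]; rw [ih (by simpa [propOccurs] using hocc) w]
  | or φ ψ ih1 ih2 =>
      intro hocc w
      simp only [propOccurs, not_or] at hocc
      simp only [sat]; rw [ih1 hocc.1 w, ih2 hocc.2 w]
  | and φ ψ ih1 ih2 =>
      intro hocc w
      simp only [propOccurs, not_or] at hocc
      simp only [sat]; rw [ih1 hocc.1 w, ih2 hocc.2 w]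
  | imp φ ψ ih1 ih2 =>
      intro hocc w
      simp only [propOccurs, not_or] at hocc
      simp only [sat]; rw [ih1 hocc.1 w, ih2 hocc.2 w]
  | dia φ ih =>
      intro hocc w
      simp only [propOccurs] at hocc
      simp only [sat]
      exact exists_congr fun v => and_congr_right fun _ => ih hocc v
  | box φ ih =>
      intro hocc w
      simp only [propOccurs] at hocc
      simp only [sat]
      exact forall_congr' fun v => imp_congr_right fun _ => ih hocc v
  | at' i φ ih => intro hocc w; simp only [sat]; exact ih (by simpa [propOccurs] using hocc) _
  | bdia φ ih =>
      intro hocc w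
      simp only [propOccurs] at hocc
      simp only [sat]
      exact exists_congr fun v => and_congr_right fun _ => ih hocc v
  | bbox φ ih =>
      intro hocc w
      simp only [propOccurs] at hocc
      simp only [sat]
      exact forall_congr' fun v => imp_congr_right fun _ => ih hocc v

lemma sat_mono {W : Type} (R : W → W → Prop) (Vn : ℕ → W) (p : ℕ)
    (Vp1 Vp2 : ℕ → Set W) (hagree : ∀ q, q ≠ p → Vp1 q = Vp2 q)
    (hsub : Vp1 p ⊆ Vp2 p) :
    ∀ φ, (∀ w, allPos p φ → sat R Vp1 Vn w φ → sat R Vp2 Vn w φ) ∧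
         (∀ w, allNeg p φ → sat R Vp2 Vn w φ → sat R Vp1 Vn w φ) := by
  intro φ
  induction φ with
  | prop q =>
      constructor
      · intro w _ hw
        by_cases hq : q = p
        · subst hq; exact hsub hw
        · simpa only [sat, hagree q hq] using hw
      · intro w hneg hw
        simp only [allNeg] at hneg
        simpa only [sat, hagree q hneg] using hw
  | nom i => exact ⟨fun w _ h => h, fun w _ h => h⟩
  | bot => exact ⟨fun w _ h => h, fun w _ h => h⟩
  | top => exact ⟨fun w _ h => h, fun w _ h => h⟩
  | neg φ ih =>
      refine ⟨fun w hp hw hc => hw (ih.2 w hp hc), fun w hn hw hc => hw (ih.1 w hn hc)⟩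
  | or φ ψ ih1 ih2 =>
      refine ⟨fun w hp hw => ?_, fun w hn hw => ?_⟩
      · exact hw.imp (ih1.1 w hp.1) (ih2.1 w hp.2)
      · exact hw.imp (ih1.2 w hn.1) (ih2.2 w hn.2)
  | and φ ψ ih1 ih2 =>
      refine ⟨fun w hp hw => ⟨ih1.1 w hp.1 hw.1, ih2.1 w hp.2 hw.2⟩,
              fun w hn hw => ⟨ih1.2 w hn.1 hw.1, ih2.2 w hn.2 hw.2⟩⟩
  | imp φ ψ ih1 ih2 =>
      refine ⟨fun w hp hw ha => ih2.1 w hp.2 (hw (ih1.2 w hp.1 ha)),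
              fun w hn hw ha => ih2.2 w hn.2 (hw (ih1.1 w hn.1 ha))⟩
  | dia φ ih =>
      refine ⟨fun w hp hw => ?_, fun w hn hw => ?_⟩
      · obtain ⟨v, hv, hs⟩ := hw; exact ⟨v, hv, ih.1 v hp hs⟩
      · obtain ⟨v, hv, hs⟩ := hw; exact ⟨v, hv, ih.2 v hn hs⟩
  | box φ ih =>
      exact ⟨fun w hp hw v hv => ih.1 v hp (hw v hv),
             fun w hn hw v hv => ih.2 v hn (hw v hv)⟩
  | at' i φ ih =>
      exact ⟨fun w hp hw => ih.1 _ hp hw, fun w hn hw => ih.2 _ hn hw⟩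
  | bdia φ ih =>
      refine ⟨fun w hp hw => ?_, fun w hn hw => ?_⟩
      · obtain ⟨v, hv, hs⟩ := hw; exact ⟨v, hv, ih.1 v hp hs⟩
      · obtain ⟨v, hv, hs⟩ := hw; exact ⟨v, hv, ih.2 v hn hs⟩
  | bbox φ ih =>
      exact ⟨fun w hp hw v hv => ih.1 v hp (hw v hv),
             fun w hn hw v hv => ih.2 v hn (hw v hv)⟩

lemma sat_subst {W : Type} (R : W → W → Prop) (Vp : ℕ → Set W) (Vn : ℕ → W)
    (p : ℕ) (θ : HFormP) :
    ∀ φ w, sat R Vp Vn w (substProp p θ φ) ↔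
      sat R (Function.update Vp p {v | sat R Vp Vn v θ}) Vn w φ := by
  intro φ
  induction φ with
  | prop q =>
      intro w
      by_cases hq : q = p
      · subst hq; simp [substProp, sat, Function.update_self, Set.mem_setOf_eq]
      · simp [substProp, hq, sat, Function.update_of_ne hq]
  | nom i => intro w; simp [substProp, sat]
  | bot => intro w; simp [substProp, sat]
  | top => intro w; simp [substProp, sat]
  | neg φ ih => intro w; simp only [substProp, sat]; rw [ih w]
  | or φ ψ ih1 ih2 => intro w; simp only [substProp, sat]; rw [ih1 w, ih2 w]
  | and φ ψ ih1 ih2 => intro w; simp only [substProp, sat]; rw [ih1 w, ih2 w]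
  | imp φ ψ ih1 ih2 => intro w; simp only [substProp, sat]; rw [ih1 w, ih2 w]
  | dia φ ih =>
      intro w; simp only [substProp, sat]
      exact exists_congr fun v => and_congr_right fun _ => ih v
  | box φ ih =>
      intro w; simp only [substProp, sat]
      exact forall_congr' fun v => imp_congr_right fun _ => ih v
  | at' i φ ih => intro w; simp only [substProp, sat]; exact ih _
  | bdia φ ih =>
      intro w; simp only [substProp, sat]
      exact exists_congr fun v => and_congr_right fun _ => ih v
  | bbox φ ih =>
      intro w; simp only [substProp, sat]
      exact forall_congr' fun v => imp_congr_right fun _ => ih v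

lemma sat_bigAnd {W : Type} (R : W → W → Prop) (Vp : ℕ → Set W) (Vn : ℕ → W) :
    ∀ (l : List HFormP) (w : W), sat R Vp Vn w (bigAnd l) ↔ ∀ φ ∈ l, sat R Vp Vn w φ := by
  intro l
  induction l with
  | nil => intro w; simp [bigAnd, sat]
  | cons φ rest ih =>
      intro w
      cases rest with
      | nil => simp [bigAnd, sat]
      | cons ψ rest' =>
          simp only [bigAnd, sat, List.mem_cons]
          rw [ih w]
          constructor
          · rintro ⟨h1, h2⟩ χ (rfl | hχ)
            · exact h1
            · exact h2 χ (List.mem_cons.mpr hχ)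
          · intro h
            exact ⟨h φ (Or.inl rfl), fun χ hχ => h χ (Or.inr (List.mem_cons.mp hχ))⟩

/-- Left-handed Ackermann lemma.  Let p be a propositional variable,
θ₁,…,θₙ L(@)⁺-formulas not containing p, and η₁ ≤ ι₁, …, η_m ≤ ι_m
inequalities with each ηⱼ negative in p and each ιⱼ positive in p.  Let
θ := θ₁ ∧ … ∧ θₙ (θ := ⊤ when n = 0).  Then for every frame (W,R) and
valuation (Vp,Vn): there is a valuation Vp' agreeing with Vp on every
propositional variable other than p (the nominal part Vn being unchanged)
such that p ≤ θᵢ and ηⱼ ≤ ιⱼ all hold in (W,R,Vp',Vn), iff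
ηⱼ[θ/p] ≤ ιⱼ[θ/p] holds in (W,R,Vp,Vn) for all j. -/
theorem left_handed_ackermann {W : Type} (hW : Nonempty W) (R : W → W → Prop)
    (p : ℕ) (n m : ℕ) (θs : Fin n → HFormP) (ηs ιs : Fin m → HFormP)
    (hθ : ∀ i : Fin n, ¬ propOccurs p (θs i))
    (hη : ∀ j : Fin m, allNeg p (ηs j))
    (hι : ∀ j : Fin m, allPos p (ιs j))
    (Vp : ℕ → Set W) (Vn : ℕ → W) :
    (∃ Vp' : ℕ → Set W, (∀ q : ℕ, q ≠ p → Vp' q = Vp q) ∧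
        (∀ i : Fin n, leq R Vp' Vn (.prop p) (θs i)) ∧
        (∀ j : Fin m, leq R Vp' Vn (ηs j) (ιs j))) ↔
    (∀ j : Fin m,
        leq R Vp Vn (substProp p (bigAnd (List.ofFn θs)) (ηs j))
          (substProp p (bigAnd (List.ofFn θs)) (ιs j))) := by
  set θ := bigAnd (List.ofFn θs) with hθdef
  set T : Set W := {v | sat R Vp Vn v θ} with hTdef
  constructor
  · rintro ⟨Vp', hag, h1, h2⟩ j w hw
    -- Vp' p ⊆ T
    have hsub : Vp' p ⊆ T := by
      intro v hv
      rw [hTdef, Set.mem_setOf_eq, sat_bigAnd]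
      intro φ hφ
      rw [List.mem_ofFn] at hφ
      obtain ⟨i, rfl⟩ := hφ
      have hs : sat R Vp' Vn v (θs i) := h1 i v hv
      exact (sat_agree R Vn p Vp' Vp hag (θs i) (hθ i) v).mp hs
    have hag2 : ∀ q, q ≠ p → Vp' q = Function.update Vp p T q := by
      intro q hq; rw [hag q hq, Function.update_of_ne hq]
    have hmono := sat_mono R Vn p Vp' (Function.update Vp p T) hag2
      (by rw [Function.update_self]; exact hsub)
    rw [sat_subst] at hw
    have hη' : sat R Vp' Vn w (ηs j) := (hmono (ηs j)).2 w (hη j) hw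
    have hι' : sat R Vp' Vn w (ιs j) := h2 j w hη'
    rw [sat_subst]
    exact (hmono (ιs j)).1 w (hι j) hι'
  · intro h
    refine ⟨Function.update Vp p T, fun q hq => Function.update_of_ne hq _ _, ?_, ?_⟩
    · intro i w hw
      have hwT : w ∈ T := by
        have := hw
        simp only [sat, Function.update_self] at this
        exact this
      rw [hTdef, Set.mem_setOf_eq, sat_bigAnd] at hwT
      have hs : sat R Vp Vn w (θs i) := hwT (θs i) (by rw [List.mem_ofFn]; exact ⟨i, rfl⟩)
      exact (sat_agree R Vn p Vp (Function.update Vp p T)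
        (fun q hq => (Function.update_of_ne hq _ _).symm) (θs i) (hθ i) w).mp hs
    · intro j w hw
      rw [← sat_subst] at hw
      have := h j w hw
      rw [sat_subst] at this
      exact this
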